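/- Let A be a 2^n × 2^n real matrix and b ∈ ℝ^{2^n}, partitioned into m×m blocks A_{ij} ∈ ℝ^{d×d} and subvectors b_i ∈ ℝ^d with b_i = Σ_j b_{ij}. Suppose the row- and column-neighbor graphs are connected with Laplacian L and L̄ = L ⊗ I_d. Then x* is a least squares solution of Ax = b if and only if there exist z_1*,…,z_m* ∈ ℝ^{md} such that (x*, {z_i*}) minimizes F(x, {z_i}) = Σ_{i=1}^m ‖Ā_i x − b̄_i − L̄ z_i‖². -/

import Mathlib

/-!
Summing the residual `Āᵢ x − b̄ᵢ − L̄ zᵢ` over the blocks kills the `L̄` term, because the columns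
of a Laplacian sum to zero, and leaves the block residual `(Ax − b)ᵢ`; by Cauchy–Schwarz,
`F(x, z) ≥ ‖Ax − b‖² / m`. For a connected graph the range of `L` is exactly the space of
sum-zero vectors, so `zᵢ` can be chosen to make every block of the residual equal to
`(Ax − b)ᵢ / m`, which attains the bound. Thus `min_z F(x, z) = ‖Ax − b‖² / m`, and the two
problems have the same minimizers in `x`.
-/

open Kronecker Matrix

theorem isLeast_range_sum_pi {ι M : Type*} [Fintype ι] [AddCommMonoid M] [PartialOrder M]
    [IsOrderedAddMonoid M] {α : ι → Type*} {f : ∀ i, α i → M} {a : ι → M}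
    (h : ∀ i, IsLeast (Set.range (f i)) (a i)) :
    IsLeast (Set.range fun y : ∀ i, α i => ∑ i, f i (y i)) (∑ i, a i) := by
  choose y hy using fun i => (h i).1
  refine ⟨⟨y, Finset.sum_congr rfl fun i _ => hy i⟩, ?_⟩
  rintro _ ⟨z, rfl⟩
  exact Finset.sum_le_sum fun i _ => (h i).2 ⟨z i, rfl⟩

theorem forall_le_iff_exists_forall_le_of_isLeast {X Z β : Type*} [Preorder β] {g : X → β}
    {F : X → Z → β} (hF : ∀ x, IsLeast (Set.range (F x)) (g x)) (xs : X) :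
    (∀ x, g xs ≤ g x) ↔ ∃ zs, ∀ x z, F xs zs ≤ F x z := by
  constructor
  · intro h
    obtain ⟨zs, hzs⟩ := (hF xs).1
    exact ⟨zs, fun x z => hzs ▸ (h x).trans ((hF x).2 ⟨z, rfl⟩)⟩
  · rintro ⟨zs, hzs⟩ x
    obtain ⟨z, hz⟩ := (hF x).1
    exact ((hF xs).2 ⟨zs, rfl⟩).trans (hz ▸ hzs x z)

namespace SimpleGraph

variable {V : Type*} [Fintype V] [DecidableEq V] (G : SimpleGraph V) [DecidableRel G.Adj]

theorem sum_lapMatrix_mulVec {R : Type*} [CommRing R] (y : V → R) :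
    ∑ v, (G.lapMatrix R *ᵥ y) v = 0 := by
  rw [← one_dotProduct, dotProduct_mulVec, ← mulVec_transpose, (G.isSymm_lapMatrix R).eq,
    show G.lapMatrix R *ᵥ 1 = 0 from G.lapMatrix_mulVec_const_eq_zero, zero_dotProduct]

theorem exists_lapMatrix_mulVec_eq_of_sum_eq_zero (hG : G.Connected) {w : V → ℝ}
    (hw : ∑ v, w v = 0) : ∃ y, G.lapMatrix ℝ *ᵥ y = w := by
  let σ : Module.Dual ℝ (V → ℝ) := Fintype.linearCombination ℝ fun _ => 1
  have hσ : ∀ u, σ u = ∑ v, u v := by simp [σ, Fintype.linearCombination_apply]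
  have hσ0 : σ ≠ 0 := fun h => by
    have := congr($h (Pi.single hG.nonempty.some 1))
    simp [hσ] at this
  have hcomp : Fintype.card G.ConnectedComponent = 1 := by
    have := hG.preconnected.subsingleton_connectedComponent
    exact Fintype.card_eq_one_iff.mpr
      ⟨G.connectedComponentMk hG.nonempty.some, fun _ => Subsingleton.elim _ _⟩
  have hrange : LinearMap.range (G.lapMatrix ℝ).toLin' = LinearMap.ker σ := by
    refine Submodule.eq_of_le_of_finrank_le ?_ ?_
    · rintro _ ⟨y, rfl⟩
      simp [hσ, sum_lapMatrix_mulVec]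
    · have hker := G.card_connectedComponent_eq_finrank_ker_toLin'_lapMatrix
      have hrank := LinearMap.finrank_range_add_finrank_ker (G.lapMatrix ℝ).toLin'
      have hσker := σ.finrank_ker_add_one_of_ne_zero hσ0
      omega
  obtain ⟨y, hy⟩ : w ∈ LinearMap.range (G.lapMatrix ℝ).toLin' := hrange ▸ (hσ w).trans hw
  exact ⟨y, hy⟩

theorem isLeast_range_sum_sq_sub_lapMatrix_mulVec (hG : G.Connected) (v : V → ℝ) :
    IsLeast (Set.range fun y => ∑ u, (v u - (G.lapMatrix ℝ *ᵥ y) u) ^ 2)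
      ((∑ u, v u) ^ 2 / Fintype.card V) := by
  have hcard : (0 : ℝ) < Fintype.card V := by
    have := hG.nonempty
    exact_mod_cast Fintype.card_pos
  constructor
  · set c := (∑ u, v u) / Fintype.card V
    obtain ⟨y, hy⟩ := G.exists_lapMatrix_mulVec_eq_of_sum_eq_zero hG (w := fun u => v u - c) (by
      rw [Finset.sum_sub_distrib, Finset.sum_const, Finset.card_univ, nsmul_eq_mul,
        mul_div_cancel₀ _ hcard.ne', sub_self])
    refine ⟨y, ?_⟩
    simp only [hy, sub_sub_cancel, Finset.sum_const, Finset.card_univ, nsmul_eq_mul, c]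
    field_simp
  · rintro _ ⟨y, rfl⟩
    have hcs := sq_sum_le_card_mul_sum_sq (s := Finset.univ)
      (f := fun u => v u - (G.lapMatrix ℝ *ᵥ y) u)
    rw [Finset.sum_sub_distrib, sum_lapMatrix_mulVec, sub_zero, Finset.card_univ] at hcs
    rwa [div_le_iff₀' hcard]

end SimpleGraph

namespace Matrix

theorem kronecker_one_mulVec_apply {R V κ : Type*} [CommSemiring R] [Fintype V] [Fintype κ]
    [DecidableEq κ] (L : Matrix V V R) (z : V × κ → R) (j : V) (s : κ) :
    ((L ⊗ₖ (1 : Matrix κ κ R)) *ᵥ z) (j, s) = (L *ᵥ fun k => z (k, s)) j := by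
  simp [mulVec, dotProduct, Fintype.sum_prod_type, one_apply]

/-- The paper's `Āᵢ = diag(A_{i1}, …, A_{im})`. -/
def blockRowDiag {R ι κ : Type*} [Zero R] [DecidableEq ι] (A : Matrix (ι × κ) (ι × κ) R) (i : ι) :
    Matrix (ι × κ) (ι × κ) R :=
  fun p q => if p.1 = q.1 then A (i, p.2) (p.1, q.2) else 0

theorem sum_blockRowDiag_mulVec {R ι κ : Type*} [NonUnitalNonAssocSemiring R] [Fintype ι]
    [DecidableEq ι] [Fintype κ] (A : Matrix (ι × κ) (ι × κ) R) (x : ι × κ → R) (i : ι) (s : κ) :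
    ∑ j, (blockRowDiag A i *ᵥ x) (j, s) = (A *ᵥ x) (i, s) := by
  simp [blockRowDiag, mulVec, dotProduct, Fintype.sum_prod_type]

end Matrix

theorem isLeast_range_distributed_objective {V κ : Type*} [Fintype V] [DecidableEq V] [Fintype κ]
    [DecidableEq κ] (G : SimpleGraph V) [DecidableRel G.Adj] (hG : G.Connected)
    (A : Matrix (V × κ) (V × κ) ℝ) (b : V × κ → ℝ) (bb : V → V → κ → ℝ)
    (hb : ∀ i s, ∑ j, bb i j s = b (i, s)) (x : V × κ → ℝ) :
    IsLeast (Set.range fun z : V → V × κ → ℝ => ∑ i, ∑ p, ((blockRowDiag A i *ᵥ x) p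
        - bb i p.1 p.2 - ((G.lapMatrix ℝ ⊗ₖ (1 : Matrix κ κ ℝ)) *ᵥ z i) p) ^ 2)
      ((∑ p, ((A *ᵥ x) p - b p) ^ 2) / Fintype.card V) := by
  let v : V × κ → V → ℝ := fun q j => (blockRowDiag A q.1 *ᵥ x) (j, q.2) - bb q.1 j q.2
  have hv : ∀ q, ∑ j, v q j = (A *ᵥ x) q - b q := fun q => by
    rw [Finset.sum_sub_distrib, sum_blockRowDiag_mulVec, hb]
  have key := isLeast_range_sum_pi fun q => G.isLeast_range_sum_sq_sub_lapMatrix_mulVec hG (v q)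
  simp only [hv, ← Finset.sum_div] at key
  refine (congrArg (IsLeast · _) ?_).mpr key
  let e : (V → V × κ → ℝ) → (V × κ → V → ℝ) := fun z q k => z q.1 (k, q.2)
  have he : Function.Surjective e := fun y => ⟨fun i p => y (i, p.2) p.1, rfl⟩
  rw [← he.range_comp]
  congr 1
  funext z
  simp only [Function.comp_apply, e, v, Fintype.sum_prod_type, kronecker_one_mulVec_apply]
  exact Finset.sum_congr rfl fun i _ => Finset.sum_comm

theorem leastSquares_iff_min_distributed_general (m d : ℕ)
    (Grow : SimpleGraph (Fin m)) [DecidableRel Grow.Adj]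
    (hrow : Grow.Connected)
    (A : Matrix (Fin m × Fin d) (Fin m × Fin d) ℝ)
    (b : Fin m × Fin d → ℝ) (bb : Fin m → Fin m → Fin d → ℝ)
    (hb : ∀ i r, ∑ j : Fin m, bb i j r = b (i, r))
    (Lbar : Matrix (Fin m × Fin d) (Fin m × Fin d) ℝ)
    (hLbar : Lbar = (Grow.lapMatrix ℝ) ⊗ₖ (1 : Matrix (Fin d) (Fin d) ℝ))
    (Abar : Fin m → Matrix (Fin m × Fin d) (Fin m × Fin d) ℝ)
    (hAbar : ∀ i p q, Abar i p q = if p.1 = q.1 then A (i, p.2) (p.1, q.2) else 0)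
    (F : (Fin m × Fin d → ℝ) → (Fin m → Fin m × Fin d → ℝ) → ℝ)
    (hF : ∀ x z, F x z = ∑ i : Fin m, ∑ p : Fin m × Fin d,
      ((Abar i).mulVec x p - bb i p.1 p.2 - Lbar.mulVec (z i) p) ^ 2)
    (xs : Fin m × Fin d → ℝ) :
    (∀ x : Fin m × Fin d → ℝ,
        ∑ p, (A.mulVec xs p - b p) ^ 2 ≤ ∑ p, (A.mulVec x p - b p) ^ 2) ↔
      (∃ zs : Fin m → Fin m × Fin d → ℝ,
        ∀ (x : Fin m × Fin d → ℝ) (z : Fin m → Fin m × Fin d → ℝ),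
          F xs zs ≤ F x z) := by
  obtain rfl : Abar = blockRowDiag A := funext fun i => Matrix.ext (hAbar i)
  subst hLbar
  have hm : (0 : ℝ) < m := by exact_mod_cast Fin.pos_iff_nonempty.mpr hrow.nonempty
  have hmin : ∀ x, IsLeast (Set.range (F x)) ((∑ p, ((A *ᵥ x) p - b p) ^ 2) / m) := fun x => by
    simpa only [funext (hF x), Fintype.card_fin] using
      isLeast_range_distributed_objective Grow hrow A b bb hb x
  rw [← forall_le_iff_exists_forall_le_of_isLeast hmin]
  simp only [div_le_div_iff_of_pos_right hm]

/-- Lemma 1: `x*` is a least squares solution of `Ax = b` if and only if there exist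
`z₁*,…,z_m*` such that `(x*, {z_i*})` minimizes `F(x,{z_i}) = Σᵢ ‖Āᵢ x − b̄ᵢ − L̄ zᵢ‖²`,
where `A` is partitioned into `m×m` blocks of size `d×d`, `Āᵢ = diag(A_{i1},…,A_{im})`,
`b̄ᵢ` stacks the `b_{ij}` with `Σⱼ b_{ij} = bᵢ`, and `L̄ = L ⊗ I_d` for the Laplacian
`L` of the connected row-neighbor graph (squared Euclidean norms written as sums). -/
theorem leastSquares_iff_min_distributed (m d : ℕ)
    (Grow Gcol : SimpleGraph (Fin m)) [DecidableRel Grow.Adj] [DecidableRel Gcol.Adj]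
    (hrow : Grow.Connected) (hcol : Gcol.Connected)
    (A : Matrix (Fin m × Fin d) (Fin m × Fin d) ℝ)
    (b : Fin m × Fin d → ℝ) (bb : Fin m → Fin m → Fin d → ℝ)
    (hb : ∀ i r, ∑ j : Fin m, bb i j r = b (i, r))
    (Lbar : Matrix (Fin m × Fin d) (Fin m × Fin d) ℝ)
    (hLbar : Lbar = (Grow.lapMatrix ℝ) ⊗ₖ (1 : Matrix (Fin d) (Fin d) ℝ))
    (Abar : Fin m → Matrix (Fin m × Fin d) (Fin m × Fin d) ℝ)
    (hAbar : ∀ i p q, Abar i p q = if p.1 = q.1 then A (i, p.2) (p.1, q.2) else 0)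
    (F : (Fin m × Fin d → ℝ) → (Fin m → Fin m × Fin d → ℝ) → ℝ)
    (hF : ∀ x z, F x z = ∑ i : Fin m, ∑ p : Fin m × Fin d,
      ((Abar i).mulVec x p - bb i p.1 p.2 - Lbar.mulVec (z i) p) ^ 2)
    (xs : Fin m × Fin d → ℝ) :
    (∀ x : Fin m × Fin d → ℝ,
        ∑ p, (A.mulVec xs p - b p) ^ 2 ≤ ∑ p, (A.mulVec x p - b p) ^ 2) ↔
      (∃ zs : Fin m → Fin m × Fin d → ℝ,
        ∀ (x : Fin m × Fin d → ℝ) (z : Fin m → Fin m × Fin d → ℝ),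
          F xs zs ≤ F x z) :=
  leastSquares_iff_min_distributed_general m d Grow hrow A b bb hb Lbar hLbar Abar hAbar F hF xs
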